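/- arXiv:2210.08955 — 3 statements merged into one kernel-verified Lean document; each statement's English description precedes it below -/
import Mathlib

section
/- For all finite connected simple graphs G and H, each with at least two vertices, meg(G □ H) ≥ max(meg(G)·|V(H)|, meg(H)·|V(G)|), where G □ H denotes the Cartesian product. -/
open SimpleGraph

/-- `S` is a monitoring edge-geodetic set (MEG-set) of `G`: for every edge `e` of `G`
there are `x, y ∈ S` whose distance in `G − e` differs from their distance in `G`
(including the case that they become disconnected in `G − e`). -/
def IsMEGSet {V : Type*} (G : SimpleGraph V) (S : Set V) : Prop :=
  ∀ e ∈ G.edgeSet, ∃ x ∈ S, ∃ y ∈ S,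
    ¬ (G.deleteEdges {e}).Reachable x y ∨ (G.deleteEdges {e}).dist x y ≠ G.dist x y

/-- The monitoring edge-geodetic number: the minimum cardinality of an MEG-set. -/
noncomputable def meg {V : Type*} [Fintype V] (G : SimpleGraph V) : ℕ :=
  sInf {n | ∃ S : Set V, IsMEGSet G S ∧ S.ncard = n}

/-- The strong product `G ⊠ H` of two simple graphs: `(a,b)` adjacent to `(c,d)` iff
`a = c` and `bd ∈ E(H)`, or `b = d` and `ac ∈ E(G)`, or `ac ∈ E(G)` and `bd ∈ E(H)`. -/
def strongProd {α β : Type*} (G : SimpleGraph α) (H : SimpleGraph β) :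
    SimpleGraph (α × β) where
  Adj x y := (x.1 = y.1 ∧ H.Adj x.2 y.2) ∨ (x.2 = y.2 ∧ G.Adj x.1 y.1) ∨
    (G.Adj x.1 y.1 ∧ H.Adj x.2 y.2)
  symm := ⟨fun x y => by
    rintro (⟨h1, h2⟩ | ⟨h1, h2⟩ | ⟨h1, h2⟩)
    · exact Or.inl ⟨h1.symm, h2.symm⟩
    · exact Or.inr (Or.inl ⟨h1.symm, h2.symm⟩)
    · exact Or.inr (Or.inr ⟨h1.symm, h2.symm⟩)⟩
  loopless := ⟨fun x => by
    rintro (⟨_, h⟩ | ⟨_, h⟩ | ⟨h, _⟩)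
    · exact H.loopless.irrefl _ h
    · exact G.loopless.irrefl _ h
    · exact G.loopless.irrefl _ h⟩

infixl:70 " ⊠ " => strongProd

/-
A minimum MEG-set `S` of `G □ H` meets every fibre `{v} × V(H)` in an MEG-set of `H`. Indeed, a
pair `x, y` monitors an edge exactly when every shortest `x`-`y` walk uses it. If `(x, a), (y, b)`
monitor the edge `(v, c)(v, d)`, then `x = y = v`: otherwise a shortest walk that runs in `H`
inside the column of `x` and then in `G`, or in `G` first and then in `H` inside the column of
`y`, avoids that edge. Once `x = y = v`, a shortest `a`-`b` walk of `H` avoiding `cd` would lift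
to the column of `v`. Summing over the `|V(G)|` fibres gives `meg H * |V(G)| ≤ meg (G □ H)`, and
the isomorphism `G □ H ≃ H □ G` gives the other bound.
-/

lemma Set.ncard_eq_sum_ncard_slice {α β : Type*} [Fintype α] [Finite β] (S : Set (α × β)) :
    S.ncard = ∑ a : α, {b | (a, b) ∈ S}.ncard := by
  rw [← Nat.card_coe_set_eq, Nat.card_congr (Equiv.setProdEquivSigma S), Nat.card_sigma]
  simp only [Nat.card_coe_set_eq]

namespace SimpleGraph

variable {V V' W : Type*}

def Monitors (G : SimpleGraph V) (e : Sym2 V) (x y : V) : Prop :=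
  ¬ (G.deleteEdges {e}).Reachable x y ∨ (G.deleteEdges {e}).dist x y ≠ G.dist x y

lemma monitors_iff_forall_mem_edges {G : SimpleGraph V} {e : Sym2 V} {x y : V} :
    G.Monitors e x y ↔ ∀ p : G.Walk x y, p.length = G.dist x y → e ∈ p.edges := by
  constructor
  · intro hmon p hp
    by_contra he
    let p' := p.toDeleteEdges {e} fun e' he' h => he (Set.mem_singleton_iff.1 h ▸ he')
    have hdist : (G.deleteEdges {e}).dist x y = G.dist x y :=
      le_antisymm ((dist_le p').trans_eq (by simp [p', hp]))
        (Reachable.dist_anti (G.deleteEdges_le _) ⟨p'⟩)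
    exact hmon.elim (· ⟨p'⟩) (· hdist)
  · intro h
    by_contra hmon
    obtain ⟨hr, hd⟩ := not_or.1 hmon
    obtain ⟨p, hp⟩ := (not_not.1 hr).exists_walk_length_eq_dist
    have hpG := h (p.mapLe (G.deleteEdges_le _)) (by rw [Walk.length_mapLe, hp, not_not.1 hd])
    simp only [Walk.mapLe, Walk.edges_map, Hom.coe_ofLE, Sym2.map_id, List.map_id_fun, id_eq]
      at hpG
    exact (edgeSet_deleteEdges _ ▸ p.edges_subset_edgeSet hpG).2 rfl

lemma Reachable.dist_boxProd {G : SimpleGraph V} {H : SimpleGraph W} {x₁ y₁ : V} {x₂ y₂ : W}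
    (h₁ : G.Reachable x₁ y₁) (h₂ : H.Reachable x₂ y₂) :
    (G □ H).dist (x₁, x₂) (y₁, y₂) = G.dist x₁ y₁ + H.dist x₂ y₂ := by
  have h := (reachable_boxProd.2 ⟨h₁, h₂⟩ : (G □ H).Reachable (x₁, x₂) (y₁, y₂)).coe_dist_eq_edist
  rw [edist_boxProd, ← h₁.coe_dist_eq_edist, ← h₂.coe_dist_eq_edist] at h
  exact_mod_cast h

namespace Walk

variable {G : SimpleGraph V} {H : SimpleGraph W}

@[simp]
lemma length_boxProdLeft {x y : V} (b : W) (p : G.Walk x y) :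
    (p.boxProdLeft H b).length = p.length :=
  length_map _ _

@[simp]
lemma length_boxProdRight {x y : W} (a : V) (q : H.Walk x y) :
    (q.boxProdRight G a).length = q.length :=
  length_map _ _

lemma edges_boxProdLeft {x y : V} (b : W) (p : G.Walk x y) :
    (p.boxProdLeft H b).edges = p.edges.map (Sym2.map (·, b)) :=
  edges_map _ _

lemma edges_boxProdRight {x y : W} (a : V) (q : H.Walk x y) :
    (q.boxProdRight G a).edges = q.edges.map (Sym2.map (a, ·)) :=
  edges_map _ _

lemma not_mem_edges_boxProdLeft {x y : V} (b : W) (p : G.Walk x y) {a : V} {c d : W}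
    (hcd : c ≠ d) : s((a, c), (a, d)) ∉ (p.boxProdLeft H b).edges := by
  rw [edges_boxProdLeft, List.mem_map]
  rintro ⟨e, -, he⟩
  induction e using Sym2.ind
  simp only [Sym2.map_mk, Sym2.eq_iff, Prod.mk.injEq] at he
  grind

lemma not_mem_edges_boxProdRight {x y : W} {a a' : V} (q : H.Walk x y) (ha : a ≠ a')
    (c d : W) : s((a', c), (a', d)) ∉ (q.boxProdRight G a).edges := by
  rw [edges_boxProdRight, List.mem_map]
  rintro ⟨e, -, he⟩
  induction e using Sym2.ind
  simp only [Sym2.map_mk, Sym2.eq_iff, Prod.mk.injEq] at he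
  grind

lemma mem_edges_boxProdRight_iff {x y : W} (a : V) (q : H.Walk x y) (c d : W) :
    s((a, c), (a, d)) ∈ (q.boxProdRight G a).edges ↔ s(c, d) ∈ q.edges := by
  rw [edges_boxProdRight,
    ← List.mem_map_of_injective (Sym2.map.injective (Prod.mk_right_injective a)) (a := s(c, d))]
  rfl

end Walk

lemma IsMEGSet.boxProd_slice {G : SimpleGraph V} {H : SimpleGraph W} (hG : G.Connected)
    (hH : H.Connected) {S : Set (V × W)} (hS : IsMEGSet (G □ H) S) (v : V) :
    IsMEGSet H {w | (v, w) ∈ S} := by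
  intro e he
  induction e using Sym2.ind with | _ c d => ?_
  rw [mem_edgeSet] at he
  have hcd : c ≠ d := he.ne
  obtain ⟨⟨x, a⟩, hxa, ⟨y, b⟩, hyb, hmon⟩ := hS s((v, c), (v, d)) (boxProd_adj_right.2 he)
  have hdist := (hG.preconnected x y).dist_boxProd (hH.preconnected a b)
  have hshortest := monitors_iff_forall_mem_edges.1 hmon
  obtain ⟨p, hp⟩ := (hG.preconnected x y).exists_walk_length_eq_dist
  obtain ⟨q, hq⟩ := (hH.preconnected a b).exists_walk_length_eq_dist
  have hx : x = v := by
    by_contra hxv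
    have := hshortest ((q.boxProdRight G x).append (p.boxProdLeft H b))
      (by simp [hp, hq, hdist, add_comm])
    rw [Walk.edges_append, List.mem_append] at this
    exact this.elim (Walk.not_mem_edges_boxProdRight q hxv c d)
      (Walk.not_mem_edges_boxProdLeft b p hcd)
  have hy : y = v := by
    by_contra hyv
    have := hshortest ((p.boxProdLeft H a).append (q.boxProdRight G y)) (by simp [hp, hq, hdist])
    rw [Walk.edges_append, List.mem_append] at this
    exact this.elim (Walk.not_mem_edges_boxProdLeft a p hcd)
      (Walk.not_mem_edges_boxProdRight q hyv c d)
  subst x y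
  refine ⟨a, hxa, b, hyb, monitors_iff_forall_mem_edges.2 fun r hr => ?_⟩
  rw [← Walk.mem_edges_boxProdRight_iff (G := G) v]
  exact hshortest _ (by simp [hr, hdist])

lemma Iso.dist_eq {G : SimpleGraph V} {G' : SimpleGraph V'} (f : G ≃g G') (x y : V) :
    G'.dist (f x) (f y) = G.dist x y := by
  by_cases h : G.Reachable x y
  · obtain ⟨p, hp⟩ := h.exists_walk_length_eq_dist
    obtain ⟨q, hq⟩ := (f.reachable_iff.2 h).exists_walk_length_eq_dist
    refine le_antisymm (hp ▸ p.length_map f.toHom ▸ dist_le _) ?_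
    have := dist_le ((q.map f.symm.toHom).copy (f.symm_apply_apply x) (f.symm_apply_apply y))
    rwa [Walk.length_copy, Walk.length_map, hq] at this
  · rw [dist_eq_zero_of_not_reachable h, dist_eq_zero_of_not_reachable (f.reachable_iff.not.2 h)]

def Iso.deleteEdges {G : SimpleGraph V} {G' : SimpleGraph V'} (f : G ≃g G') (e : Sym2 V) :
    G.deleteEdges {e} ≃g G'.deleteEdges {e.map f} where
  toEquiv := f.toEquiv
  map_rel_iff' {x y} := by
    simp only [deleteEdges_adj, Set.mem_singleton_iff]
    exact and_congr f.map_adj_iff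
      (not_congr ((Sym2.map.injective f.injective).eq_iff (a := s(x, y))))

lemma Iso.monitors_iff {G : SimpleGraph V} {G' : SimpleGraph V'} (f : G ≃g G') {e : Sym2 V}
    {x y : V} : G'.Monitors (e.map f) (f x) (f y) ↔ G.Monitors e x y := by
  have hr : (G'.deleteEdges {e.map f}).Reachable (f x) (f y) ↔ (G.deleteEdges {e}).Reachable x y :=
    (f.deleteEdges e).reachable_iff
  have hd : (G'.deleteEdges {e.map f}).dist (f x) (f y) = (G.deleteEdges {e}).dist x y :=
    (f.deleteEdges e).dist_eq x y
  simp only [Monitors, hr, hd, f.dist_eq]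

lemma IsMEGSet.preimage_iso {G : SimpleGraph V} {G' : SimpleGraph V'} (f : G ≃g G')
    {S : Set V'} (hS : IsMEGSet G' S) : IsMEGSet G (f ⁻¹' S) := by
  intro e he
  obtain ⟨x, hx, y, hy, hmon⟩ := hS (e.map f) (f.map_mem_edgeSet_iff.2 he)
  refine ⟨f.symm x, by simpa using hx, f.symm y, by simpa using hy, f.monitors_iff.1 ?_⟩
  rwa [f.apply_symm_apply, f.apply_symm_apply]

lemma isMEGSet_univ (G : SimpleGraph V) : IsMEGSet G Set.univ := by
  intro e he
  induction e using Sym2.ind with | _ x y => ?_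
  refine ⟨x, trivial, y, trivial, Or.inr ?_⟩
  rw [dist_eq_one_iff_adj.2 he, Ne, dist_eq_one_iff_adj, deleteEdges_adj]
  exact fun h => h.2 rfl

section meg

variable [Fintype V] {G : SimpleGraph V}

lemma meg_le_ncard {S : Set V} (hS : IsMEGSet G S) : meg G ≤ S.ncard :=
  Nat.sInf_le ⟨S, hS, rfl⟩

lemma exists_isMEGSet_ncard_eq_meg (G : SimpleGraph V) : ∃ S, IsMEGSet G S ∧ S.ncard = meg G :=
  Nat.sInf_mem (s := {n | ∃ S : Set V, IsMEGSet G S ∧ S.ncard = n})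
    ⟨_, Set.univ, isMEGSet_univ G, rfl⟩

lemma Iso.meg_le [Fintype V'] {G' : SimpleGraph V'} (f : G ≃g G') : meg G ≤ meg G' := by
  obtain ⟨S, hS, hcard⟩ := exists_isMEGSet_ncard_eq_meg G'
  calc meg G ≤ (f ⁻¹' S).ncard := meg_le_ncard (hS.preimage_iso f)
    _ = meg G' := by
      rw [← hcard, Set.ncard_preimage_of_injective_subset_range f.injective (by simp)]

lemma Iso.meg_eq [Fintype V'] {G' : SimpleGraph V'} (f : G ≃g G') : meg G = meg G' :=
  le_antisymm f.meg_le f.symm.meg_le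

end meg

lemma meg_mul_card_le_meg_boxProd [Fintype V] [Fintype W] {G : SimpleGraph V}
    {H : SimpleGraph W} (hG : G.Connected) (hH : H.Connected) :
    meg H * Fintype.card V ≤ meg (G □ H) := by
  obtain ⟨S, hS, hcard⟩ := exists_isMEGSet_ncard_eq_meg (G □ H)
  calc meg H * Fintype.card V = ∑ _v : V, meg H := by simp [mul_comm]
    _ ≤ ∑ v : V, {w | (v, w) ∈ S}.ncard :=
      Finset.sum_le_sum fun v _ => meg_le_ncard (hS.boxProd_slice hG hH v)
    _ = meg (G □ H) := by rw [← hcard, S.ncard_eq_sum_ncard_slice]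

end SimpleGraph

theorem meg_boxProd_lower_bound_general {V W : Type*} [Fintype V] [Fintype W]
    (G : SimpleGraph V) (H : SimpleGraph W)
    (hG : G.Connected) (hH : H.Connected) :
    max (meg G * Fintype.card W) (meg H * Fintype.card V) ≤ meg (G □ H) :=
  max_le ((boxProdComm G H).meg_eq ▸ meg_mul_card_le_meg_boxProd hH hG)
    (meg_mul_card_le_meg_boxProd hG hH)

theorem meg_boxProd_lower_bound {V W : Type*} [Fintype V] [Fintype W]
    (G : SimpleGraph V) (H : SimpleGraph W)
    (hG : G.Connected) (hH : H.Connected)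
    (hV : 1 < Fintype.card V) (hW : 1 < Fintype.card W) :
    max (meg G * Fintype.card W) (meg H * Fintype.card V) ≤ meg (G □ H) :=
  meg_boxProd_lower_bound_general G H hG hH
end

section
/- Let G be a finite connected simple graph of diameter 2. Then every MEG-set of G is a vertex cover of G (a set of vertices containing at least one endpoint of every edge). -/
open SimpleGraph

infixl:70 " ⊠ " => strongProd

/-- A vertex cover: a set of vertices containing at least one endpoint of every edge. -/
def IsVertexCover {V : Type*} (G : SimpleGraph V) (C : Set V) : Prop :=
  ∀ e ∈ G.edgeSet, ∃ v ∈ C, v ∈ e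

/-!
An edge `e` is monitored by `x, y ∈ S` only if it lies on every shortest `x`–`y` path: deleting
an edge off some shortest path leaves that path, and so the distance, intact. A graph of
diameter two is connected (`diam` is `0` on disconnected graphs), and its shortest paths have
at most two edges, each of which has `x` or `y` as an endpoint.
-/

namespace SimpleGraph

variable {V : Type*} {G : SimpleGraph V} {e : Sym2 V}

lemma Walk.mem_or_mem_of_mem_edges_of_length_le_two :
    ∀ {u v : V} (p : G.Walk u v), p.length ≤ 2 → e ∈ p.edges → u ∈ e ∨ v ∈ e
  | _, _, .nil, _, he => by simp at he
  | _, _, .cons _ .nil, _, he => by simp_all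
  | _, _, .cons _ (.cons _ .nil), _, he => by
    simp only [Walk.edges_cons, Walk.edges_nil, List.mem_cons, List.not_mem_nil, or_false] at he
    rcases he with rfl | rfl <;> simp
  | _, _, .cons _ (.cons _ (.cons _ _)), hp, _ => by simp at hp

lemma Walk.dist_deleteEdges_eq_of_notMem_edges {u v : V} (p : G.Walk u v)
    (hp : p.length = G.dist u v) (he : e ∉ p.edges) :
    (G.deleteEdges {e}).dist u v = G.dist u v := by
  let q := p.toDeleteEdge e he
  refine le_antisymm ?_ (Reachable.dist_anti (G.deleteEdges_le _) ⟨q⟩)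
  calc (G.deleteEdges {e}).dist u v ≤ q.length := dist_le q
    _ = G.dist u v := by rw [Walk.length_transfer, hp]

lemma Reachable.mem_or_mem_of_dist_deleteEdges_ne {u v : V} (huv : G.Reachable u v)
    (hd : G.dist u v ≤ 2)
    (he : ¬ (G.deleteEdges {e}).Reachable u v ∨ (G.deleteEdges {e}).dist u v ≠ G.dist u v) :
    u ∈ e ∨ v ∈ e := by
  obtain ⟨p, hp⟩ := huv.exists_walk_length_eq_dist
  by_cases hep : e ∈ p.edges
  · exact p.mem_or_mem_of_mem_edges_of_length_le_two (hp ▸ hd) hep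
  · rcases he with hunreach | hne
    · exact absurd ⟨p.toDeleteEdge e hep⟩ hunreach
    · exact absurd (p.dist_deleteEdges_eq_of_notMem_edges hp hep) hne

end SimpleGraph

theorem isVertexCover_of_isMEGSet_of_diam_two_general {V : Type*}
    (G : SimpleGraph V) (hdiam : G.diam = 2) :
    ∀ S : Set V, IsMEGSet G S → _root_.IsVertexCover G S := by
  intro S hS e he
  obtain ⟨x, hx, y, hy, hxy⟩ := hS e he
  have hfin : G.ediam ≠ ⊤ := G.ediam_ne_top_of_diam_ne_zero (by omega)
  have hdist : G.dist x y ≤ 2 := hdiam ▸ G.dist_le_diam hfin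
  rcases (preconnected_of_ediam_ne_top hfin x y).mem_or_mem_of_dist_deleteEdges_ne hdist hxy
    with h | h
  exacts [⟨x, hx, h⟩, ⟨y, hy, h⟩]

theorem isVertexCover_of_isMEGSet_of_diam_two {V : Type*} [Fintype V]
    (G : SimpleGraph V) (hG : G.Connected) (hdiam : G.diam = 2) :
    ∀ S : Set V, IsMEGSet G S → _root_.IsVertexCover G S :=
  isVertexCover_of_isMEGSet_of_diam_two_general G hdiam
end

section
/- Let G be a finite connected simple graph of diameter 2. Then meg(G) ≥ τ(G), where τ(G) is the vertex cover number of G. -/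
open SimpleGraph

infixl:70 " ⊠ " => strongProd

/-- The vertex cover number: the minimum cardinality of a vertex cover. -/
noncomputable def vertexCoverNumber {V : Type*} [Fintype V] (G : SimpleGraph V) : ℕ :=
  sInf {n | ∃ C : Set V, _root_.IsVertexCover G C ∧ C.ncard = n}


/-! If every two vertices are at distance at most 2 and deleting the edge `e` changes `d(x, y)`,
then `e` lies on every shortest `x`–`y` walk, which has length at most 2, so `e` contains `x`
or `y`. Hence every MEG-set is a vertex cover. -/

namespace SimpleGraph.Walk

variable {V : Type*} {G : SimpleGraph V} {x y : V} {e : Sym2 V}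

theorem mem_edges_of_length_eq_dist (p : G.Walk x y) (hp : p.length = G.dist x y)
    (he : ¬ (G.deleteEdges {e}).Reachable x y ∨ (G.deleteEdges {e}).dist x y ≠ G.dist x y) :
    e ∈ p.edges := by
  by_contra hep
  let q : (G.deleteEdges {e}).Walk x y := p.toDeleteEdge e hep
  have hdist : (G.deleteEdges {e}).dist x y = G.dist x y :=
    le_antisymm ((dist_le q).trans_eq (by simp [q, hp]))
      (Reachable.dist_anti (G.deleteEdges_le _) ⟨q⟩)
  exact he.elim (· ⟨q⟩) (· hdist)

theorem mem_or_mem_of_mem_edges_of_length_le_two_s16 :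
    ∀ p : G.Walk x y, p.length ≤ 2 → e ∈ p.edges → x ∈ e ∨ y ∈ e
  | .cons _ .nil, _, he => by simp_all
  | .cons _ (.cons _ .nil), _, he => by
    simp only [edges_cons, edges_nil, List.mem_cons, List.not_mem_nil, or_false] at he
    rcases he with rfl | rfl <;> simp
  | .cons _ (.cons _ (.cons _ _)), hp, _ => by simp at hp

end SimpleGraph.Walk

section MEGSet

variable {V : Type*} {G : SimpleGraph V}

theorem isMEGSet_univ : IsMEGSet G Set.univ := by
  rintro ⟨u, v⟩ (huv : G.Adj u v)
  refine ⟨u, trivial, v, trivial, Or.inr ?_⟩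
  rw [dist_eq_one_iff_adj.mpr huv, Ne, dist_eq_one_iff_adj]
  simp

theorem IsMEGSet.isVertexCover {S : Set V} (hS : IsMEGSet G S) (hG : G.ediam ≤ 2) :
    _root_.IsVertexCover G S := by
  intro e he
  obtain ⟨x, hx, y, hy, hxy⟩ := hS e he
  have hr : G.Reachable x y :=
    preconnected_of_ediam_ne_top (ne_top_of_le_ne_top (by decide) hG) x y
  obtain ⟨p, hp⟩ := hr.exists_walk_length_eq_dist
  have hlen : p.length ≤ 2 := by
    have : (G.dist x y : ℕ∞) ≤ 2 := hr.coe_dist_eq_edist ▸ edist_le_ediam.trans hG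
    rw [hp]
    exact_mod_cast this
  rcases p.mem_or_mem_of_mem_edges_of_length_le_two_s16 hlen (p.mem_edges_of_length_eq_dist hp hxy)
    with h | h
  exacts [⟨x, hx, h⟩, ⟨y, hy, h⟩]

theorem vertexCoverNumber_le_meg [Fintype V]
    (h : ∀ S, IsMEGSet G S → _root_.IsVertexCover G S) : vertexCoverNumber G ≤ meg G := by
  obtain ⟨S, hS, hcard⟩ : meg G ∈ {n | ∃ S : Set V, IsMEGSet G S ∧ S.ncard = n} :=
    Nat.sInf_mem ⟨_, Set.univ, isMEGSet_univ, rfl⟩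
  exact Nat.sInf_le ⟨S, h S hS, hcard⟩

end MEGSet

theorem vertexCoverNumber_le_meg_of_diam_two_general {V : Type*} [Fintype V]
    (G : SimpleGraph V) (hdiam : G.diam = 2) :
    vertexCoverNumber G ≤ meg G := by
  have hG : G.ediam = 2 := by
    rw [← ENat.natCast_toNat (ediam_ne_top_of_diam_ne_zero (by omega)), ← diam, hdiam]
    rfl
  exact vertexCoverNumber_le_meg fun S hS => hS.isVertexCover hG.le

theorem vertexCoverNumber_le_meg_of_diam_two {V : Type*} [Fintype V]
    (G : SimpleGraph V) (hG : G.Connected) (hdiam : G.diam = 2) :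
    vertexCoverNumber G ≤ meg G :=
  vertexCoverNumber_le_meg_of_diam_two_general G hdiam
end
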